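/- Let 0 < d < D be integers, let L₁ be a d-flat in ℝ^D, let x ∈ L₁, let 0 < w < r, and let Ω ⊆ ℝ^D be a measurable set such that Ω ∩ B(x,r) = T(L₁,w) ∩ B(x,r). Define β₂(x,r)² = inf over d-flats L of (1/vol(Ω ∩ B(x,r))) · ∫_{Ω ∩ B(x,r)} (dist(y,L)/(2r))² dy. Then β₂(x,r)² ≤ ((D−d)/(D−d+2)) · (w²/(4r²)) · (1 − w²/r²)^{−d/2}. -/

import Mathlib

open MeasureTheory Metric

/-- The tube of width `w` around a set `L`. -/
def tube {E : Type*} [PseudoMetricSpace E] (L : Set E) (w : ℝ) : Set E :=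
  {y | infDist y L ≤ w}

/-- The squared (scaled) least squares `β₂` number of `Ω ∩ B(x,r)`: the infimum over all
`d`-dimensional affine subspaces `L` of `ℝ^D` of the average over `Ω ∩ B(x,r)` of
`(dist(y,L)/(2r))²`, with respect to Lebesgue measure. -/
noncomputable def beta2Sq (d D : ℕ) (Ω : Set (EuclideanSpace ℝ (Fin D)))
    (x : EuclideanSpace ℝ (Fin D)) (r : ℝ) : ℝ :=
  sInf { s : ℝ | ∃ L : AffineSubspace ℝ (EuclideanSpace ℝ (Fin D)),
    Module.finrank ℝ L.direction = d ∧ (L : Set (EuclideanSpace ℝ (Fin D))).Nonempty ∧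
    s = ((volume (Ω ∩ closedBall x r)).toReal)⁻¹ *
      ∫ y in Ω ∩ closedBall x r,
        (infDist y (L : Set (EuclideanSpace ℝ (Fin D))) / (2 * r)) ^ 2 }

/-! In the coordinates `y = x + a + b`, `a ∈ L₁.direction`, `b ∈ L₁.directionᗮ`, which preserve
volume, one has `dist(y, L₁) = ‖b‖` and `Ω ∩ B(x,r)` becomes `{‖b‖ ≤ w, ‖a‖² + ‖b‖² ≤ r²}`. This
set lies between the cylinders `B(√(r²-w²)) × B(w)` and `B(r) × B(w)`. Test `β₂` against `L₁`,
bound the integral of `‖b‖²` above by the one over the larger cylinder and the volume below by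
that of the smaller one. The radial moment `∫_{B(w)} ‖b‖² = n/(n+2) · w² · vol B(w)` in dimension
`n = D - d` gives the factor `(D-d)/(D-d+2)`, and the ratio of the two `d`-dimensional balls gives
`(r/√(r²-w²))^d = (1 - w²/r²)^{-d/2}`. -/

open Module Set

section Moment

variable {F : Type*} [NormedAddCommGroup F] [NormedSpace ℝ F] [FiniteDimensional ℝ F]
  [MeasurableSpace F] [BorelSpace F] [Nontrivial F] (μ : Measure F) [μ.IsAddHaarMeasure]

theorem integral_closedBall_norm_sq {w : ℝ} (hw : 0 ≤ w) :
    ∫ q in closedBall (0 : F) w, ‖q‖ ^ 2 ∂μ =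
      finrank ℝ F * μ.real (ball 0 1) * (w ^ (finrank ℝ F + 2) / (finrank ℝ F + 2)) := by
  have hn : 0 < finrank ℝ F := finrank_pos
  have radial : ∫ q in closedBall (0 : F) w, ‖q‖ ^ 2 ∂μ =
      ∫ q, (Iic w).indicator (fun t : ℝ => t ^ 2) ‖q‖ ∂μ := by
    rw [← integral_indicator measurableSet_closedBall]
    congr 1 with q
    simp only [indicator, mem_closedBall_zero_iff, mem_Iic]
  have radial_integral : ∫ t in Ioi (0 : ℝ),
      t ^ (finrank ℝ F - 1) • (Iic w).indicator (fun t => t ^ 2) t =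
      ∫ t in Ioc 0 w, t ^ (finrank ℝ F + 1) := by
    rw [← Ioi_inter_Iic, ← setIntegral_indicator measurableSet_Iic]
    congr 1 with t
    by_cases ht : t ≤ w
    · simp only [indicator_of_mem (mem_Iic.2 ht), smul_eq_mul, ← pow_add]
      congr 1; omega
    · simp [indicator_of_notMem (notMem_Iic.2 (not_le.1 ht))]
  rw [radial, integral_fun_norm_addHaar, radial_integral, ← intervalIntegral.integral_of_le hw,
    integral_pow, nsmul_eq_mul, smul_eq_mul]
  push_cast
  ring

end Moment

theorem mem_tube {E : Type*} [PseudoMetricSpace E] {L : Set E} {w : ℝ} {y : E} :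
    y ∈ tube L w ↔ infDist y L ≤ w :=
  Iff.rfl

theorem isClosed_tube {E : Type*} [PseudoMetricSpace E] (L : Set E) (w : ℝ) :
    IsClosed (tube L w) :=
  isClosed_le (continuous_infDist_pt L) continuous_const

namespace Submodule

variable {E : Type*} [NormedAddCommGroup E] [InnerProductSpace ℝ E] [FiniteDimensional ℝ E]
  [MeasurableSpace E] [BorelSpace E] (K : Submodule ℝ E) (x : E)

noncomputable def orthogonalCoordinates : K × Kᗮ ≃ᵐ E :=
  (MeasurableEquiv.toLp 2 (K × Kᗮ)).trans <|
    K.orthogonalDecomposition.symm.toHomeomorph.toMeasurableEquiv.trans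
      (Homeomorph.addLeft x).toMeasurableEquiv

variable {K x}

theorem orthogonalCoordinates_apply (p : K × Kᗮ) :
    K.orthogonalCoordinates x p = x + ((p.1 : E) + p.2) :=
  rfl

theorem measurePreserving_orthogonalCoordinates :
    MeasurePreserving (K.orthogonalCoordinates x) :=
  (measurePreserving_add_left volume x).comp <|
    K.orthogonalDecomposition.symm.measurePreserving.comp (WithLp.volume_preserving_toLp K Kᗮ)

theorem dist_orthogonalCoordinates_sq (p : K × Kᗮ) :
    dist (K.orthogonalCoordinates x p) x ^ 2 = ‖p.1‖ ^ 2 + ‖p.2‖ ^ 2 := by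
  rw [orthogonalCoordinates_apply, dist_eq_norm, add_sub_cancel_left, sq, sq, sq,
    norm_add_sq_eq_norm_sq_add_norm_sq_real (K.inner_right_of_mem_orthogonal p.1.2 p.2.2)]
  rfl

theorem norm_fst_le_dist_orthogonalCoordinates (p : K × Kᗮ) :
    ‖p.1‖ ≤ dist (K.orthogonalCoordinates x p) x :=
  (sq_le_sq₀ (norm_nonneg _) dist_nonneg).1 <| by
    rw [dist_orthogonalCoordinates_sq]; exact le_add_of_nonneg_right (sq_nonneg _)

end Submodule

namespace AffineSubspace

variable {E : Type*} [NormedAddCommGroup E] [InnerProductSpace ℝ E] [FiniteDimensional ℝ E]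
  [MeasurableSpace E] [BorelSpace E] {L : AffineSubspace ℝ E} {x : E}

theorem infDist_orthogonalCoordinates (hx : x ∈ L) (p : L.direction × L.directionᗮ) :
    infDist (L.direction.orthogonalCoordinates x p) L = ‖p.2‖ := by
  have : Nonempty L := ⟨⟨x, hx⟩⟩
  have hx₁ : (p.1 : E) +ᵥ x ∈ L := vadd_mem_of_mem_direction p.1.2 hx
  rw [← EuclideanGeometry.dist_orthogonalProjection_eq_infDist,
    show L.direction.orthogonalCoordinates x p = (p.2 : E) +ᵥ ((p.1 : E) +ᵥ x) by
      rw [Submodule.orthogonalCoordinates_apply, vadd_eq_add, vadd_eq_add]; abel,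
    EuclideanGeometry.orthogonalProjection_vadd_eq_self hx₁ p.2.2, dist_vadd_left]
  rfl

theorem volume_closedBall_mul_volume_closedBall_le_volume_tube_inter_closedBall (hx : x ∈ L)
    {w r : ℝ} (hw : 0 ≤ w) (hwr : w ≤ r) :
    volume (closedBall (0 : L.direction) √(r ^ 2 - w ^ 2)) *
        volume (closedBall (0 : L.directionᗮ) w) ≤
      volume (tube L w ∩ closedBall x r) := by
  rw [← Measure.prod_prod, ← Measure.volume_eq_prod,
    ← (Submodule.measurePreserving_orthogonalCoordinates (x := x)).measure_preimage
      ((isClosed_tube _ _).measurableSet.inter measurableSet_closedBall).nullMeasurableSet]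
  refine measure_mono fun p ⟨hp₁, hp₂⟩ => ⟨?_, ?_⟩
  · rw [mem_closedBall_zero_iff] at hp₂
    rwa [mem_tube, infDist_orthogonalCoordinates hx]
  · rw [mem_closedBall_zero_iff] at hp₁ hp₂
    rw [mem_closedBall, ← sq_le_sq₀ dist_nonneg (hw.trans hwr),
      Submodule.dist_orthogonalCoordinates_sq]
    have hp₁' := sq_le_sq' (by linarith [norm_nonneg p.1]) hp₁
    rw [Real.sq_sqrt (by nlinarith)] at hp₁'
    nlinarith [sq_le_sq' (by linarith [norm_nonneg p.2]) hp₂]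

theorem setIntegral_tube_inter_closedBall_infDist_sq_le (hx : x ∈ L) (w r : ℝ) :
    ∫ y in tube L w ∩ closedBall x r, infDist y L ^ 2 ≤
      volume.real (closedBall (0 : L.direction) r) *
        ∫ q in closedBall (0 : L.directionᗮ) w, ‖q‖ ^ 2 := by
  have hφ := Submodule.measurePreserving_orthogonalCoordinates (K := L.direction) (x := x)
  rw [← hφ.setIntegral_preimage_emb (MeasurableEquiv.measurableEmbedding _)]
  simp_rw [infDist_orthogonalCoordinates hx]
  calc ∫ p in L.direction.orthogonalCoordinates x ⁻¹' (tube L w ∩ closedBall x r), ‖p.2‖ ^ 2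
      ≤ ∫ p in closedBall (0 : L.direction) r ×ˢ closedBall (0 : L.directionᗮ) w, ‖p.2‖ ^ 2 := by
        refine setIntegral_mono_set ?_ (.of_forall fun _ => sq_nonneg _) (LE.le.eventuallyLE ?_)
        · exact (continuous_snd.norm.pow 2).continuousOn.integrableOn_compact
            ((isCompact_closedBall _ _).prod (isCompact_closedBall _ _))
        · rintro p ⟨hp₁, hp₂⟩
          refine ⟨mem_closedBall_zero_iff.2 ?_, mem_closedBall_zero_iff.2 ?_⟩
          · exact (Submodule.norm_fst_le_dist_orthogonalCoordinates p).trans hp₂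
          · rwa [mem_tube, infDist_orthogonalCoordinates hx] at hp₁
    _ = _ := by
        rw [Measure.volume_eq_prod, ← Measure.prod_restrict,
          integral_fun_snd fun q : L.directionᗮ => ‖q‖ ^ 2, measureReal_def,
          Measure.restrict_apply_univ, smul_eq_mul]
        rfl

theorem setAverage_infDist_sq_tube_inter_closedBall_le [Nontrivial L.directionᗮ] (hx : x ∈ L)
    {w r : ℝ} (hw : 0 < w) (hwr : w < r) :
    ⨍ y in tube L w ∩ closedBall x r, infDist y L ^ 2 ≤
      finrank ℝ L.directionᗮ / (finrank ℝ L.directionᗮ + 2) * w ^ 2 *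
        (r / √(r ^ 2 - w ^ 2)) ^ finrank ℝ L.direction := by
  set d := finrank ℝ L.direction
  set n := finrank ℝ L.directionᗮ
  set ρ := √(r ^ 2 - w ^ 2)
  set c₁ := volume.real (ball (0 : L.direction) 1)
  set c₂ := volume.real (ball (0 : L.directionᗮ) 1)
  have hr : 0 < r := hw.trans hwr
  have hρ : 0 < ρ := Real.sqrt_pos.2 (by nlinarith)
  have hc₁ : 0 < c₁ := ENNReal.toReal_pos (measure_ball_pos _ _ one_pos).ne' measure_ball_lt_top.ne
  have hc₂ : 0 < c₂ := ENNReal.toReal_pos (measure_ball_pos _ _ one_pos).ne' measure_ball_lt_top.ne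
  have hvol : ρ ^ d * c₁ * (w ^ n * c₂) ≤ volume.real (tube L w ∩ closedBall x r) := by
    have := ENNReal.toReal_mono
      (measure_ne_top_of_subset inter_subset_right measure_closedBall_lt_top.ne)
      (volume_closedBall_mul_volume_closedBall_le_volume_tube_inter_closedBall hx hw.le hwr.le)
    rwa [ENNReal.toReal_mul, ← measureReal_def, ← measureReal_def,
      Measure.addHaar_real_closedBall _ _ hρ.le, Measure.addHaar_real_closedBall _ _ hw.le] at this
  have hint : ∫ y in tube L w ∩ closedBall x r, infDist y L ^ 2 ≤
      r ^ d * c₁ * (n * c₂ * (w ^ (n + 2) / (n + 2))) := by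
    grw [setIntegral_tube_inter_closedBall_infDist_sq_le hx w r,
      Measure.addHaar_real_closedBall _ _ hr.le, integral_closedBall_norm_sq _ hw.le]
  rw [setAverage_eq, smul_eq_mul]
  calc _ ≤ (ρ ^ d * c₁ * (w ^ n * c₂))⁻¹ * (r ^ d * c₁ * (n * c₂ * (w ^ (n + 2) / (n + 2)))) := by
        gcongr
    _ = _ := by
        rw [div_pow]
        field_simp
        ring

end AffineSubspace

theorem beta2Sq_le_of_finrank_direction_eq {d D : ℕ} {Ω : Set (EuclideanSpace ℝ (Fin D))}
    {x : EuclideanSpace ℝ (Fin D)} {r : ℝ} (L : AffineSubspace ℝ (EuclideanSpace ℝ (Fin D)))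
    (hL : finrank ℝ L.direction = d) (hL' : (L : Set (EuclideanSpace ℝ (Fin D))).Nonempty) :
    beta2Sq d D Ω x r ≤
      ⨍ y in Ω ∩ closedBall x r,
        (infDist y (L : Set (EuclideanSpace ℝ (Fin D))) / (2 * r)) ^ 2 := by
  rw [setAverage_eq, smul_eq_mul]
  exact csInf_le ⟨0, by rintro s ⟨L, -, -, rfl⟩; positivity⟩ ⟨L, hL, hL', rfl⟩

theorem sq_rpow_neg_half {t : ℝ} (ht : 0 ≤ t) (d : ℕ) : (t ^ 2) ^ (-(d : ℝ) / 2) = (t ^ d)⁻¹ := by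
  rw [← Real.rpow_natCast t 2, ← Real.rpow_mul ht, Nat.cast_ofNat,
    mul_div_cancel₀ _ two_ne_zero, Real.rpow_neg ht, Real.rpow_natCast]

theorem beta2Sq_upper_bound (d D : ℕ) (hdD : d < D)
    (L₁ : AffineSubspace ℝ (EuclideanSpace ℝ (Fin D)))
    (hL₁d : Module.finrank ℝ L₁.direction = d)
    (x : EuclideanSpace ℝ (Fin D)) (hx : x ∈ L₁)
    (w r : ℝ) (hw : 0 < w) (hwr : w < r)
    (Ω : Set (EuclideanSpace ℝ (Fin D)))
    (hΩ : Ω ∩ closedBall x r =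
      tube (L₁ : Set (EuclideanSpace ℝ (Fin D))) w ∩ closedBall x r) :
    beta2Sq d D Ω x r ≤
      (((D - d : ℕ) : ℝ) / (((D - d : ℕ) : ℝ) + 2)) * (w ^ 2 / (4 * r ^ 2)) *
        (1 - w ^ 2 / r ^ 2) ^ (-(d : ℝ) / 2) := by
  have hr : 0 < r := hw.trans hwr
  have h_codim : finrank ℝ L₁.directionᗮ = D - d := by
    have := L₁.direction.finrank_add_finrank_orthogonal
    rw [hL₁d, finrank_euclideanSpace_fin] at this
    omega
  have : Nontrivial L₁.directionᗮ := nontrivial_of_finrank_pos (by rw [h_codim]; omega)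
  have h_one_sub : 1 - w ^ 2 / r ^ 2 = (√(r ^ 2 - w ^ 2) / r) ^ 2 := by
    rw [div_pow, Real.sq_sqrt (by nlinarith)]
    field_simp
  calc beta2Sq d D Ω x r
      ≤ ⨍ y in Ω ∩ closedBall x r, (infDist y L₁ / (2 * r)) ^ 2 :=
        beta2Sq_le_of_finrank_direction_eq L₁ hL₁d ⟨x, hx⟩
    _ = (⨍ y in tube L₁ w ∩ closedBall x r, infDist y L₁ ^ 2) / (2 * r) ^ 2 := by
        simp_rw [hΩ, div_pow, setAverage_eq, integral_div, smul_eq_mul, mul_div_assoc]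
    _ ≤ (D - d : ℕ) / ((D - d : ℕ) + 2) * w ^ 2 * (r / √(r ^ 2 - w ^ 2)) ^ d / (2 * r) ^ 2 := by
        grw [L₁.setAverage_infDist_sq_tube_inter_closedBall_le hx hw hwr, h_codim, hL₁d]
    _ = _ := by
        rw [h_one_sub, sq_rpow_neg_half (by positivity), ← inv_pow, inv_div]
        ring
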